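/- Let n, a, ℓ be positive integers with na ≤ ℓ, let σ be a permutation of {1, …, a}, let λ₁, …, λ_a : [0,1] → 𝕋 be continuous maps satisfying λ_{σ(p)}(0) = λ_p(1) for every p, and let w : [0,1] → U(a) be a continuous path with w(0) = I_a and w(1) = v_σ, where v_σ is the permutation matrix obtained from the identity matrix by permuting its rows according to σ. Set u(t) := diag(w(t) ⊗ Iₙ, I_{ℓ−na}) ∈ U(ℓ). Then there exists a (unique) *-homomorphism φ : C(𝕋, Mₙ) → C(𝕋, M_ℓ) such that for every f ∈ C(𝕋, Mₙ) and every t ∈ [0,1], φ(f)(e^{2πit}) = u(t) · diag(f(λ₁(t)), f(λ₂(t)), …, f(λ_a(t)), 0_{ℓ−na}) · u(t)*; in particular the right-hand side takes the same value at t = 0 and t = 1, so this formula is well defined on 𝕋. -/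

import Mathlib

/-!
For fixed `t`, the formula is the composite of evaluation at the points `λ_p(t)`, the
block-diagonal embedding, and conjugation by the unitary `u(t)`, hence a *-homomorphism
`C(𝕋, Mₙ) → M_ℓ`. Conjugating by `v_σ ⊗ Iₙ` permutes the diagonal blocks by `σ`, so the
condition `λ_{σ(p)}(0) = λ_p(1)` makes the formulas at `t = 0` and `t = 1` agree. Finally,
`t ↦ e^{2πit}` is a continuous surjection from the compact interval onto the circle that
identifies only `0` and `1`; it is therefore a quotient map, and a family of *-homomorphisms
that is continuous in `t` and agrees at the endpoints descends uniquely to `C(𝕋, M_ℓ)`.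
-/

open scoped Kronecker

/-- The canonical identification `Fin k ⊕ Fin (ℓ - k) ≃ Fin ℓ` when `k ≤ ℓ`. -/
noncomputable def sumEquiv {k ℓ : ℕ} (h : k ≤ ℓ) : Fin k ⊕ Fin (ℓ - k) ≃ Fin ℓ :=
  finSumFinEquiv.trans (finCongr (Nat.add_sub_cancel' h))

/-- `diagBlock h M` is the `ℓ × ℓ` matrix `diag(M 0, M 1, …, M (a-1), 0_{ℓ - n*a})`
built from `a` blocks of size `n × n`. -/
noncomputable def diagBlock {n a ℓ : ℕ} (h : n * a ≤ ℓ)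
    (M : Fin a → Matrix (Fin n) (Fin n) ℂ) : Matrix (Fin ℓ) (Fin ℓ) ℂ :=
  Matrix.reindex (sumEquiv h) (sumEquiv h)
    (Matrix.fromBlocks
      (Matrix.reindex finProdFinEquiv finProdFinEquiv (Matrix.blockDiagonal M)) 0 0 0)

/-- `conjU h W` is the `ℓ × ℓ` unitary `diag(W ⊗ Iₙ, I_{ℓ - n*a})` (in block form compatible
with `diagBlock`). -/
noncomputable def conjU {n a ℓ : ℕ} (h : n * a ≤ ℓ) (W : Matrix (Fin a) (Fin a) ℂ) :
    Matrix (Fin ℓ) (Fin ℓ) ℂ :=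
  Matrix.reindex (sumEquiv h) (sumEquiv h)
    (Matrix.fromBlocks
      (Matrix.reindex finProdFinEquiv finProdFinEquiv
        ((1 : Matrix (Fin n) (Fin n) ℂ) ⊗ₖ W)) 0 0 1)

/-- The permutation matrix `v_σ` obtained from the identity matrix by permuting its rows
according to `σ`. -/
def permMat {a : ℕ} (σ : Equiv.Perm (Fin a)) : Matrix (Fin a) (Fin a) ℂ :=
  Matrix.of fun i j => if σ j = i then (1 : ℂ) else 0

open Matrix

section BlockEmbed

variable {n a ℓ : ℕ} (h : n * a ≤ ℓ) {α : Type*}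

/-- `diag(X, Y)` in the coordinates of `diagBlock` and `conjU`. -/
noncomputable def blockEmbed [Zero α] (X : Matrix (Fin n × Fin a) (Fin n × Fin a) α)
    (Y : Matrix (Fin (ℓ - n * a)) (Fin (ℓ - n * a)) α) : Matrix (Fin ℓ) (Fin ℓ) α :=
  reindex (sumEquiv h) (sumEquiv h) (fromBlocks (reindex finProdFinEquiv finProdFinEquiv X) 0 0 Y)

variable (X X' : Matrix (Fin n × Fin a) (Fin n × Fin a) α)
  (Y Y' : Matrix (Fin (ℓ - n * a)) (Fin (ℓ - n * a)) α)

lemma blockEmbed_zero [Zero α] : blockEmbed h (0 : Matrix (Fin n × Fin a) _ α) 0 = 0 := by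
  simp [blockEmbed]

lemma blockEmbed_one [Zero α] [One α] : blockEmbed h (1 : Matrix (Fin n × Fin a) _ α) 1 = 1 := by
  simp [blockEmbed, fromBlocks_one]

lemma blockEmbed_mul [NonUnitalNonAssocSemiring α] :
    blockEmbed h X Y * blockEmbed h X' Y' = blockEmbed h (X * X') (Y * Y') := by
  simp [blockEmbed, fromBlocks_multiply]

lemma blockEmbed_add [AddZeroClass α] :
    blockEmbed h (X + X') (Y + Y') = blockEmbed h X Y + blockEmbed h X' Y' := by
  ext i j
  obtain ⟨i, rfl⟩ := (sumEquiv h).surjective i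
  obtain ⟨j, rfl⟩ := (sumEquiv h).surjective j
  rcases i with i | i <;> rcases j with j | j <;> simp [blockEmbed]

lemma blockEmbed_smul {R : Type*} [Zero α] [SMulZeroClass R α] (c : R) :
    blockEmbed h (c • X) (c • Y) = c • blockEmbed h X Y := by
  ext i j
  obtain ⟨i, rfl⟩ := (sumEquiv h).surjective i
  obtain ⟨j, rfl⟩ := (sumEquiv h).surjective j
  rcases i with i | i <;> rcases j with j | j <;> simp [blockEmbed]

lemma conjTranspose_blockEmbed [AddMonoid α] [StarAddMonoid α] :
    (blockEmbed h X Y)ᴴ = blockEmbed h Xᴴ Yᴴ := by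
  simp [blockEmbed, fromBlocks_conjTranspose]

lemma continuous_blockEmbed [Zero α] [TopologicalSpace α] :
    Continuous fun XY : Matrix (Fin n × Fin a) (Fin n × Fin a) α ×
      Matrix (Fin (ℓ - n * a)) (Fin (ℓ - n * a)) α => blockEmbed h XY.1 XY.2 := by
  unfold blockEmbed
  fun_prop

end BlockEmbed

lemma submatrix_one_mul_mul_conjTranspose {m R : Type*} [Fintype m] [DecidableEq m] [Semiring R]
    [StarRing R] (e : m ≃ m) (B : Matrix m m R) :
    (1 : Matrix m m R).submatrix e (Equiv.refl m) * B *
        ((1 : Matrix m m R).submatrix e (Equiv.refl m))ᴴ = B.submatrix e e := by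
  rw [conjTranspose_submatrix, conjTranspose_one, one_submatrix_mul, mul_submatrix_one,
    submatrix_submatrix]
  simp

lemma blockDiagonal_submatrix_prodCongr {m o α : Type*} [DecidableEq o] [Zero α]
    (σ : Equiv.Perm o) (M : o → Matrix m m α) :
    (blockDiagonal M).submatrix (Equiv.prodCongr (Equiv.refl m) σ)
        (Equiv.prodCongr (Equiv.refl m) σ) = blockDiagonal (fun p => M (σ p)) := by
  ext ⟨i, p⟩ ⟨j, q⟩
  simp [blockDiagonal_apply]

section TypeABlocks

variable {n a ℓ : ℕ} (h : n * a ≤ ℓ)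

lemma diagBlock_eq_blockEmbed (M : Fin a → Matrix (Fin n) (Fin n) ℂ) :
    diagBlock h M = blockEmbed h (blockDiagonal M) 0 := rfl

lemma conjU_eq_blockEmbed (W : Matrix (Fin a) (Fin a) ℂ) :
    conjU h W = blockEmbed h ((1 : Matrix (Fin n) (Fin n) ℂ) ⊗ₖ W) 1 := rfl

lemma conjU_one : conjU h (1 : Matrix (Fin a) (Fin a) ℂ) = 1 := by
  rw [conjU_eq_blockEmbed, one_kronecker_one, blockEmbed_one]

lemma conjU_mul (W W' : Matrix (Fin a) (Fin a) ℂ) :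
    conjU h W * conjU h W' = conjU h (W * W') := by
  simp only [conjU_eq_blockEmbed, blockEmbed_mul, ← mul_kronecker_mul, Matrix.mul_one]

lemma star_conjU (W : Matrix (Fin a) (Fin a) ℂ) : star (conjU h W) = conjU h (star W) := by
  simp only [star_eq_conjTranspose, conjU_eq_blockEmbed, conjTranspose_blockEmbed,
    conjTranspose_kronecker, conjTranspose_one]

lemma conjU_mem_unitary {W : Matrix (Fin a) (Fin a) ℂ}
    (hW : W ∈ unitary (Matrix (Fin a) (Fin a) ℂ)) :
    conjU h W ∈ unitary (Matrix (Fin ℓ) (Fin ℓ) ℂ) := by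
  obtain ⟨hstar_mul, hmul_star⟩ := Unitary.mem_iff.mp hW
  rw [Unitary.mem_iff, star_conjU, conjU_mul, conjU_mul, hstar_mul, hmul_star, conjU_one]
  exact ⟨rfl, rfl⟩

noncomputable def diagBlockHom :
    (Fin a → Matrix (Fin n) (Fin n) ℂ) →⋆ₙₐ[ℂ] Matrix (Fin ℓ) (Fin ℓ) ℂ where
  toFun := diagBlock h
  map_smul' c M := by
    simp only [diagBlock_eq_blockEmbed, ← blockEmbed_smul, blockDiagonal_smul, smul_zero]
    rfl
  map_zero' := by rw [diagBlock_eq_blockEmbed, blockDiagonal_zero, blockEmbed_zero]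
  map_add' M N := by
    simp only [diagBlock_eq_blockEmbed, ← blockEmbed_add, blockDiagonal_add, add_zero]
  map_mul' M N := by
    simp only [diagBlock_eq_blockEmbed, blockEmbed_mul, ← blockDiagonal_mul, mul_zero]
    rfl
  map_star' M := by
    simp only [diagBlock_eq_blockEmbed, star_eq_conjTranspose, conjTranspose_blockEmbed,
      blockDiagonal_conjTranspose, conjTranspose_zero]
    rfl

lemma one_kronecker_permMat (σ : Equiv.Perm (Fin a)) :
    (1 : Matrix (Fin n) (Fin n) ℂ) ⊗ₖ permMat σ =
      (1 : Matrix (Fin n × Fin a) (Fin n × Fin a) ℂ).submatrix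
        (Equiv.prodCongr (Equiv.refl (Fin n)) σ).symm (Equiv.refl _) := by
  ext ⟨i, p⟩ ⟨j, q⟩
  simp only [kroneckerMap_apply, permMat, of_apply, submatrix_apply, one_apply, Prod.ext_iff,
    Equiv.prodCongr_symm, Equiv.prodCongr_apply, Equiv.coe_refl, Prod.map, id_eq,
    Equiv.refl_symm, Equiv.symm_apply_eq]
  by_cases hij : i = j <;> by_cases hpq : p = σ q <;> simp [hij, hpq, eq_comm]

lemma conjU_permMat_conj (σ : Equiv.Perm (Fin a)) (M : Fin a → Matrix (Fin n) (Fin n) ℂ) :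
    conjU h (permMat σ) * diagBlock h M * star (conjU h (permMat σ)) =
      diagBlock h (fun p => M (σ.symm p)) := by
  rw [star_eq_conjTranspose, conjU_eq_blockEmbed, diagBlock_eq_blockEmbed,
    conjTranspose_blockEmbed, blockEmbed_mul, blockEmbed_mul, one_kronecker_permMat,
    submatrix_one_mul_mul_conjTranspose, Equiv.prodCongr_symm, Equiv.refl_symm,
    blockDiagonal_submatrix_prodCongr, mul_zero, zero_mul, diagBlock_eq_blockEmbed]

lemma continuous_conjU :
    Continuous (conjU h : Matrix (Fin a) (Fin a) ℂ → Matrix (Fin ℓ) (Fin ℓ) ℂ) := by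
  have hkron : Continuous fun W : Matrix (Fin a) (Fin a) ℂ => (1 : Matrix (Fin n) (Fin n) ℂ) ⊗ₖ W :=
    continuous_matrix fun _ _ => continuous_const.mul (continuous_id.matrix_elem _ _)
  exact (continuous_blockEmbed h).comp (hkron.prodMk continuous_const)

lemma continuous_diagBlock :
    Continuous (diagBlock h : (Fin a → Matrix (Fin n) (Fin n) ℂ) → Matrix (Fin ℓ) (Fin ℓ) ℂ) :=
  (continuous_blockEmbed h).comp (continuous_id.matrix_blockDiagonal.prodMk continuous_const)

end TypeABlocks

section CircleLoop

open Topology Real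

noncomputable def circleLoop : C(unitInterval, Circle) :=
  ⟨fun t => Circle.exp (2 * π * t), by fun_prop⟩

lemma circleLoop_surjective : Function.Surjective circleLoop := by
  intro z
  obtain ⟨θ, rfl⟩ := Circle.exp_surjective z
  refine ⟨⟨Int.fract (θ / (2 * π)), Int.fract_nonneg _, (Int.fract_lt_one _).le⟩, ?_⟩
  refine Circle.exp_eq_exp.mpr ⟨-⌊θ / (2 * π)⌋, ?_⟩
  change 2 * π * Int.fract (θ / (2 * π)) = _
  rw [← Int.self_sub_floor, Int.cast_neg]
  field_simp
  ring

lemma circleLoop_eq_circleLoop {s t : unitInterval} (hst : circleLoop s = circleLoop t) :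
    s = t ∨ s = 0 ∧ t = 1 ∨ s = 1 ∧ t = 0 := by
  obtain ⟨m, hm⟩ := Circle.exp_eq_exp.mp hst
  have hsm : (s : ℝ) = t + m := by
    have := two_pi_pos
    nlinarith
  have hm_le : m ≤ 1 := by
    have : (m : ℝ) ≤ 1 := by linarith [s.2.2, t.2.1]
    exact_mod_cast this
  have hm_ge : -1 ≤ m := by
    have : (-1 : ℝ) ≤ m := by linarith [s.2.1, t.2.2]
    exact_mod_cast this
  interval_cases m
  · refine Or.inr (Or.inl ⟨Subtype.ext ?_, Subtype.ext ?_⟩) <;>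
      simp only [Int.cast_neg, Int.cast_one, Set.Icc.coe_zero, Set.Icc.coe_one] at hsm ⊢ <;>
      linarith [s.2.1, t.2.2]
  · exact Or.inl (Subtype.ext (by simpa using hsm))
  · refine Or.inr (Or.inr ⟨Subtype.ext ?_, Subtype.ext ?_⟩) <;>
      simp only [Int.cast_one, Set.Icc.coe_zero, Set.Icc.coe_one] at hsm ⊢ <;>
      linarith [s.2.2, t.2.1]

lemma isQuotientMap_circleLoop : IsQuotientMap circleLoop :=
  .of_surjective_continuous circleLoop_surjective circleLoop.continuous

lemma factorsThrough_circleLoop {X : Type*} {g : unitInterval → X} (hg : g 0 = g 1) :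
    Function.FactorsThrough g circleLoop := by
  intro s t hst
  rcases circleLoop_eq_circleLoop hst with rfl | ⟨rfl, rfl⟩ | ⟨rfl, rfl⟩
  exacts [rfl, hg, hg.symm]

variable {X : Type*} [TopologicalSpace X]

noncomputable def ContinuousMap.circleLift (g : C(unitInterval, X)) (hg : g 0 = g 1) :
    C(Circle, X) :=
  isQuotientMap_circleLoop.lift g (factorsThrough_circleLoop hg)

@[simp]
lemma ContinuousMap.circleLift_circleLoop (g : C(unitInterval, X)) (hg : g 0 = g 1)
    (t : unitInterval) : g.circleLift hg (circleLoop t) = g t :=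
  DFunLike.congr_fun (isQuotientMap_circleLoop.lift_comp g (factorsThrough_circleLoop hg)) t

lemma ContinuousMap.ext_circleLoop {F G : C(Circle, X)}
    (hFG : ∀ t, F (circleLoop t) = G (circleLoop t)) : F = G := by
  ext z
  obtain ⟨t, rfl⟩ := circleLoop_surjective z
  exact hFG t

end CircleLoop

section CircleDescent

variable {R A B : Type*} [Monoid R] [NonUnitalNonAssocSemiring A] [DistribMulAction R A] [Star A]
  [NonUnitalNonAssocSemiring B] [TopologicalSpace B] [IsTopologicalSemiring B]
  [DistribMulAction R B] [ContinuousConstSMul R B] [Star B] [ContinuousStar B]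

theorem existsUnique_nonUnitalStarAlgHom_circle (ψ : unitInterval → A →⋆ₙₐ[R] B)
    (hψ : ∀ x, Continuous fun t => ψ t x) (hends : ∀ x, ψ 0 x = ψ 1 x) :
    ∃! φ : A →⋆ₙₐ[R] C(Circle, B), ∀ x t, φ x (circleLoop t) = ψ t x := by
  let loop (x : A) : C(unitInterval, B) := ⟨fun t => ψ t x, hψ x⟩
  have loop_apply (x : A) (t : unitInterval) : loop x t = ψ t x := rfl
  refine ⟨{ toFun x := (loop x).circleLift (hends x)
            map_smul' r x := ContinuousMap.ext_circleLoop fun t => by simp [loop_apply]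
            map_zero' := ContinuousMap.ext_circleLoop fun t => by simp [loop_apply]
            map_add' x y := ContinuousMap.ext_circleLoop fun t => by simp [loop_apply]
            map_mul' x y := ContinuousMap.ext_circleLoop fun t => by simp [loop_apply]
            map_star' x := ContinuousMap.ext_circleLoop fun t => by simp [loop_apply, map_star] },
    fun x t => ContinuousMap.circleLift_circleLoop _ (hends x) t, fun φ hφ => ?_⟩
  ext x : 1
  exact ContinuousMap.ext_circleLoop fun t => by simp [hφ, loop_apply]

end CircleDescent

def ContinuousMap.evalAtNonUnitalStarAlgHom {X ι R A : Type*} [TopologicalSpace X] [Monoid R]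
    [NonUnitalNonAssocSemiring A] [TopologicalSpace A] [IsTopologicalSemiring A]
    [DistribMulAction R A] [ContinuousConstSMul R A] [Star A] [ContinuousStar A] (x : ι → X) :
    C(X, A) →⋆ₙₐ[R] (ι → A) where
  toFun f i := f (x i)
  map_smul' _ _ := rfl
  map_zero' := rfl
  map_add' _ _ := rfl
  map_mul' _ _ := rfl
  map_star' _ := rfl

noncomputable def typeAFiberHom {n a ℓ : ℕ} (h : n * a ≤ ℓ) (z : Fin a → Circle)
    (U : unitary (Matrix (Fin a) (Fin a) ℂ)) :
    C(Circle, Matrix (Fin n) (Fin n) ℂ) →⋆ₙₐ[ℂ] Matrix (Fin ℓ) (Fin ℓ) ℂ :=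
  ((Unitary.conjStarAlgAut ℂ _ ⟨conjU h U, conjU_mem_unitary h U.2⟩ :
      Matrix (Fin ℓ) (Fin ℓ) ℂ →⋆ₐ[ℂ] Matrix (Fin ℓ) (Fin ℓ) ℂ) : _ →⋆ₙₐ[ℂ] _).comp
    ((diagBlockHom h).comp (ContinuousMap.evalAtNonUnitalStarAlgHom z))

lemma typeAFiberHom_apply {n a ℓ : ℕ} (h : n * a ≤ ℓ) (z : Fin a → Circle)
    (U : unitary (Matrix (Fin a) (Fin a) ℂ)) (f : C(Circle, Matrix (Fin n) (Fin n) ℂ)) :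
    typeAFiberHom h z U f = conjU h U * diagBlock h (fun p => f (z p)) * star (conjU h U) :=
  rfl

theorem exists_unique_typeA_hom_general (n a ℓ : ℕ)
    (h : n * a ≤ ℓ) (σ : Equiv.Perm (Fin a))
    (lam : Fin a → C(unitInterval, Circle))
    (hlam : ∀ p : Fin a, lam (σ p) 0 = lam p 1)
    (w : C(unitInterval, Matrix (Fin a) (Fin a) ℂ))
    (hw : ∀ t : unitInterval, w t ∈ Matrix.unitaryGroup (Fin a) ℂ)
    (hw0 : w 0 = 1) (hw1 : w 1 = permMat σ) :
    (∀ f : C(Circle, Matrix (Fin n) (Fin n) ℂ),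
      conjU h (w 0) * diagBlock h (fun p => f (lam p 0)) * star (conjU h (w 0)) =
        conjU h (w 1) * diagBlock h (fun p => f (lam p 1)) * star (conjU h (w 1))) ∧
    (∃! φ : C(Circle, Matrix (Fin n) (Fin n) ℂ) →⋆ₙₐ[ℂ] C(Circle, Matrix (Fin ℓ) (Fin ℓ) ℂ),
      ∀ (f : C(Circle, Matrix (Fin n) (Fin n) ℂ)) (t : unitInterval),
        φ f (Circle.exp (2 * Real.pi * (t : ℝ))) =
          conjU h (w t) * diagBlock h (fun p => f (lam p t)) * star (conjU h (w t))) := by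
  let ψ (t : unitInterval) := typeAFiberHom h (fun p => lam p t) ⟨w t, hw t⟩
  have hends (f : C(Circle, Matrix (Fin n) (Fin n) ℂ)) : ψ 0 f = ψ 1 f := by
    rw [typeAFiberHom_apply, typeAFiberHom_apply]
    simp only [hw0, hw1, conjU_one, star_one, one_mul, mul_one, conjU_permMat_conj, ← hlam,
      Equiv.apply_symm_apply]
  have hcont (f : C(Circle, Matrix (Fin n) (Fin n) ℂ)) : Continuous fun t => ψ t f := by
    simp only [ψ, typeAFiberHom_apply]
    have hu := (continuous_conjU h).comp w.continuous
    exact (hu.mul ((continuous_diagBlock h).comp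
      (continuous_pi fun p => f.continuous.comp (lam p).continuous))).mul hu.star
  exact ⟨hends, existsUnique_nonUnitalStarAlgHom_circle ψ hcont hends⟩

/-- Thomsen's existence result: given multiplicity data
`(a, σ, λ₁, …, λ_a, w)` with `n·a ≤ ℓ`, `λ_{σ(p)}(0) = λ_p(1)`, `w(0) = I`, `w(1) = v_σ`,
the formula `φ(f)(e^{2πit}) = u(t)·diag(f(λ₁(t)),…,f(λ_a(t)),0)·u(t)*` (with
`u(t) = diag(w(t) ⊗ Iₙ, I_{ℓ-na})`) is well defined at the endpoints and determines a unique
*-homomorphism `φ : C(𝕋, Mₙ) → C(𝕋, M_ℓ)`. -/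
theorem exists_unique_typeA_hom (n a ℓ : ℕ) (hn : 0 < n) (ha : 0 < a) (hℓ : 0 < ℓ)
    (h : n * a ≤ ℓ) (σ : Equiv.Perm (Fin a))
    (lam : Fin a → C(unitInterval, Circle))
    (hlam : ∀ p : Fin a, lam (σ p) 0 = lam p 1)
    (w : C(unitInterval, Matrix (Fin a) (Fin a) ℂ))
    (hw : ∀ t : unitInterval, w t ∈ Matrix.unitaryGroup (Fin a) ℂ)
    (hw0 : w 0 = 1) (hw1 : w 1 = permMat σ) :
    (∀ f : C(Circle, Matrix (Fin n) (Fin n) ℂ),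
      conjU h (w 0) * diagBlock h (fun p => f (lam p 0)) * star (conjU h (w 0)) =
        conjU h (w 1) * diagBlock h (fun p => f (lam p 1)) * star (conjU h (w 1))) ∧
    (∃! φ : C(Circle, Matrix (Fin n) (Fin n) ℂ) →⋆ₙₐ[ℂ] C(Circle, Matrix (Fin ℓ) (Fin ℓ) ℂ),
      ∀ (f : C(Circle, Matrix (Fin n) (Fin n) ℂ)) (t : unitInterval),
        φ f (Circle.exp (2 * Real.pi * (t : ℝ))) =
          conjU h (w t) * diagBlock h (fun p => f (lam p t)) * star (conjU h (w t))) :=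
  exists_unique_typeA_hom_general n a ℓ h σ lam hlam w hw hw0 hw1
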